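/- arXiv:2009.05343 — 4 statements merged into one kernel-verified Lean document; each statement's English description precedes it below -/
import Mathlib

section
/- Let V be a linear subspace of the space of n×n real symmetric matrices that is closed under Hadamard (entrywise) multiplication. Then V has a basis consisting of pairwise disjoint (0,1)-matrices, i.e., matrices F₀,...,F_d with entries in {0,1} satisfying F_i ∘ F_j = 0 for i ≠ j, where ∘ denotes Hadamard product. -/
/-!
Call two points equivalent when every function in `V` takes the same value at them. If
`w ∈ V` does not vanish at `s` and `t` is not equivalent to `s`, then some `f ∈ V` has
`f s ≠ f t`, and `w * f - f t • w ∈ V` vanishes at `t` but not at `s`. Multiplying `w` by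
one such function for every `t` gives an element of `V` supported exactly on the class of
`s`, hence the indicator of that class lies in `V`. Every element of `V` is constant on
classes and vanishes on the classes where all of `V` vanishes, so the indicators of the
remaining classes form a basis of `V`; they are disjoint (0,1)-vectors.
-/

open Finset

namespace Submodule

variable {K S : Type*} [Field K] (V : Submodule K (S → K))

def pointSetoid : Setoid S where
  r s t := ∀ f ∈ V, f s = f t
  iseqv := ⟨fun _ _ _ => rfl, fun h f hf => (h f hf).symm,
    fun h₁ h₂ f hf => (h₁ f hf).trans (h₂ f hf)⟩

noncomputable def classIndicator (q : Quotient V.pointSetoid) : S → K :=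
  Set.indicator {u | ⟦u⟧ = q} 1

abbrev SupportClass :=
  {q : Quotient V.pointSetoid // ∃ f ∈ V, f q.out ≠ 0}

variable {V}

lemma apply_eq_of_mk_eq {f : S → K} (hf : f ∈ V) {s t : S}
    (h : (⟦s⟧ : Quotient V.pointSetoid) = ⟦t⟧) : f s = f t :=
  Quotient.exact h f hf

lemma classIndicator_apply (q : Quotient V.pointSetoid) (u : S) [Decidable (⟦u⟧ = q)] :
    V.classIndicator q u = if ⟦u⟧ = q then 1 else 0 := by
  simp [classIndicator, Set.indicator_apply]

lemma classIndicator_apply_eq_zero_or_one (q : Quotient V.pointSetoid) (u : S) :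
    V.classIndicator q u = 0 ∨ V.classIndicator q u = 1 := by
  classical
  rw [classIndicator_apply]
  split_ifs <;> simp

lemma classIndicator_mul_classIndicator {q q' : Quotient V.pointSetoid} (h : q ≠ q') :
    V.classIndicator q * V.classIndicator q' = 0 := by
  classical
  ext u
  simp only [Pi.mul_apply, classIndicator_apply, Pi.zero_apply]
  split_ifs <;> simp_all

open scoped Classical in
lemma eq_sum_classIndicator [Fintype S] {f : S → K} (hf : f ∈ V) :
    f = ∑ q, f q.out • V.classIndicator q := by
  ext u
  simp only [Finset.sum_apply, Pi.smul_apply, smul_eq_mul, classIndicator_apply, mul_ite,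
    mul_one, mul_zero, Finset.sum_ite_eq, Finset.mem_univ, if_true]
  exact apply_eq_of_mk_eq hf (Quotient.out_eq _).symm

lemma linearIndependent_classIndicator :
    LinearIndependent K fun q : V.SupportClass => V.classIndicator q.1 := by
  classical
  refine LinearIndependent.of_comp (LinearMap.funLeft K K fun q : V.SupportClass => q.1.out) ?_
  convert Pi.linearIndependent_single_one V.SupportClass K with q
  ext q'
  simp [LinearMap.funLeft_apply, classIndicator_apply, Pi.single_apply, Subtype.ext_iff]

lemma exists_mem_apply_ne_zero_apply_eq_zero (hmul : ∀ f ∈ V, ∀ g ∈ V, f * g ∈ V)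
    {w : S → K} (hw : w ∈ V) {s t : S} (hws : w s ≠ 0)
    (hst : (⟦s⟧ : Quotient V.pointSetoid) ≠ ⟦t⟧) :
    ∃ h ∈ V, h s ≠ 0 ∧ h t = 0 := by
  obtain ⟨f, hf, hfst⟩ : ∃ f ∈ V, f s ≠ f t := by
    by_contra! h
    exact hst (Quotient.sound h)
  refine ⟨w * f - f t • w, V.sub_mem (hmul w hw f hf) (V.smul_mem _ hw), ?_, ?_⟩
  · have : (w * f - f t • w) s = w s * (f s - f t) := by simp; ring
    rw [this]
    exact mul_ne_zero hws (sub_ne_zero.2 hfst)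
  · simp [mul_comm]

lemma mul_prod_mem (hmul : ∀ f ∈ V, ∀ g ∈ V, f * g ∈ V) {ι : Type*} {w : S → K} (hw : w ∈ V)
    (T : Finset ι) {g : ι → S → K} (hg : ∀ i ∈ T, g i ∈ V) : w * ∏ i ∈ T, g i ∈ V := by
  classical
  induction T using Finset.induction with
  | empty => simpa using hw
  | insert a T ha ih =>
    rw [Finset.prod_insert ha, mul_left_comm]
    exact hmul _ (hg a (mem_insert_self a T)) _ (ih fun i hi => hg i (mem_insert_of_mem hi))

lemma classIndicator_mem [Fintype S] (hmul : ∀ f ∈ V, ∀ g ∈ V, f * g ∈ V) {w : S → K}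
    (hw : w ∈ V) {s : S} (hws : w s ≠ 0) : V.classIndicator ⟦s⟧ ∈ V := by
  classical
  have hsep (t : S) :
      ∃ h ∈ V, (⟦s⟧ : Quotient V.pointSetoid) ≠ ⟦t⟧ → h s ≠ 0 ∧ h t = 0 := by
    by_cases hst : (⟦s⟧ : Quotient V.pointSetoid) = ⟦t⟧
    · exact ⟨0, V.zero_mem, fun h => absurd hst h⟩
    · obtain ⟨h, hV, hh⟩ := exists_mem_apply_ne_zero_apply_eq_zero hmul hw hws hst
      exact ⟨h, hV, fun _ => hh⟩
  choose h hV hsep using hsep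
  set T := univ.filter fun t => (⟦s⟧ : Quotient V.pointSetoid) ≠ ⟦t⟧
  set H := w * ∏ t ∈ T, h t
  have hH : H ∈ V := mul_prod_mem hmul hw T fun t _ => hV t
  have hHs : H s ≠ 0 := by
    simpa [H, prod_apply, hws, prod_eq_zero_iff, T] using fun t ht => (hsep t ht).1
  suffices V.classIndicator ⟦s⟧ = (H s)⁻¹ • H from this ▸ V.smul_mem _ hH
  ext u
  rw [classIndicator_apply, Pi.smul_apply, smul_eq_mul]
  split_ifs with hu
  · rw [apply_eq_of_mk_eq hH hu, inv_mul_cancel₀ hHs]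
  · have hHu : H u = 0 := by
      simp only [H, Pi.mul_apply, prod_apply]
      exact mul_eq_zero_of_right _
        (prod_eq_zero (by simp [T, Ne.symm hu]) (hsep u (Ne.symm hu)).2)
    rw [hHu, mul_zero]

lemma span_classIndicator [Fintype S] (hmul : ∀ f ∈ V, ∀ g ∈ V, f * g ∈ V) :
    span K (Set.range fun q : V.SupportClass => V.classIndicator q.1) = V := by
  refine le_antisymm (span_le.2 ?_) fun f hf => ?_
  · rintro _ ⟨⟨q, w, hw, hwq⟩, rfl⟩
    simpa using classIndicator_mem hmul hw hwq
  rw [eq_sum_classIndicator hf]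
  refine sum_mem fun q _ => ?_
  by_cases hq : ∃ f ∈ V, f q.out ≠ 0
  · exact smul_mem _ _ (subset_span ⟨⟨q, hq⟩, rfl⟩)
  · push Not at hq
    simp [hq f hf]

theorem exists_disjoint_zeroOne_basis_of_mul_mem [Fintype S]
    (hmul : ∀ f ∈ V, ∀ g ∈ V, f * g ∈ V) :
    ∃ (d : ℕ) (F : Fin d → S → K),
      LinearIndependent K F ∧ span K (Set.range F) = V ∧
      (∀ i x, F i x = 0 ∨ F i x = 1) ∧ (∀ i j, i ≠ j → F i * F j = 0) := by
  let e := Finite.equivFin V.SupportClass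
  refine ⟨_, fun i => V.classIndicator (e.symm i).1, ?_, ?_, ?_, ?_⟩
  · exact linearIndependent_classIndicator.comp _ e.symm.injective
  · exact (congrArg _ (e.symm.surjective.range_comp _)).trans (span_classIndicator hmul)
  · exact fun i => classIndicator_apply_eq_zero_or_one _
  · exact fun i j hij => classIndicator_mul_classIndicator
      (Subtype.val_injective.ne (e.symm.injective.ne hij))

end Submodule

theorem stmt_1_general {n : ℕ} (V : Submodule ℝ (Matrix (Fin n) (Fin n) ℝ))
    (hhad : ∀ M ∈ V, ∀ N ∈ V, Matrix.hadamard M N ∈ V) :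
    ∃ (d : ℕ) (F : Fin d → Matrix (Fin n) (Fin n) ℝ),
      LinearIndependent ℝ F ∧
      Submodule.span ℝ (Set.range F) = V ∧
      (∀ i x y, F i x y = 0 ∨ F i x y = 1) ∧
      (∀ i j, i ≠ j → Matrix.hadamard (F i) (F j) = 0) := by
  let e : (Fin n × Fin n → ℝ) ≃ₗ[ℝ] Matrix (Fin n) (Fin n) ℝ := LinearEquiv.curry ℝ ℝ _ _
  obtain ⟨d, G, hli, hspan, h01, hdisj⟩ :=
    (V.comap e.toLinearMap).exists_disjoint_zeroOne_basis_of_mul_mem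
      fun f hf g hg => hhad _ hf _ hg
  refine ⟨d, e ∘ G, hli.map' _ e.ker, ?_, fun i x y => h01 i (x, y), fun i j hij => ?_⟩
  · rw [Set.range_comp, ← e.coe_toLinearMap, ← Submodule.map_span, hspan,
      Submodule.map_comap_eq_of_surjective e.surjective]
  · ext x y
    exact congrFun (hdisj i j hij) (x, y)

/-- A subspace of real symmetric matrices closed under Hadamard
multiplication has a basis of pairwise disjoint (0,1)-matrices. -/
theorem stmt_1 {n : ℕ} (V : Submodule ℝ (Matrix (Fin n) (Fin n) ℝ))
    (hsymm : ∀ M ∈ V, M.IsSymm)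
    (hhad : ∀ M ∈ V, ∀ N ∈ V, Matrix.hadamard M N ∈ V) :
    ∃ (d : ℕ) (F : Fin d → Matrix (Fin n) (Fin n) ℝ),
      LinearIndependent ℝ F ∧
      Submodule.span ℝ (Set.range F) = V ∧
      (∀ i x y, F i x y = 0 ∨ F i x y = 1) ∧
      (∀ i j, i ≠ j → Matrix.hadamard (F i) (F j) = 0) :=
  stmt_1_general V hhad
end

section
/- Let Γ be a connected regular graph of valency k with diameter 2 on vertex set X, having 4 distinct eigenvalues, such that any two vertices at distance 2 have exactly μ common neighbours, while for adjacent vertices x,y the number of common neighbours |Γ(x)∩Γ(y)| takes exactly two values λ₁ ≠ λ₂. Then the span of {I, A, A², A³} is closed under Hadamard multiplication. -/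
open Matrix Polynomial Finset

lemma stmt16_pow_mulVec {n : Type*} [Fintype n] [DecidableEq n] (A : Matrix n n ℝ) (v : n → ℝ)
    (θ : ℝ) (hv : A *ᵥ v = θ • v) (i : ℕ) : (A ^ i) *ᵥ v = θ ^ i • v := by
  induction i with
  | zero => simp
  | succ m ih =>
    rw [pow_succ', pow_succ', ← Matrix.mulVec_mulVec, ih, Matrix.mulVec_smul, hv,
      smul_smul, mul_comm]

lemma stmt16_aeval_mulVec {n : Type*} [Fintype n] [DecidableEq n] (A : Matrix n n ℝ) (v : n → ℝ)
    (θ : ℝ) (hv : A *ᵥ v = θ • v) (f : Polynomial ℝ) :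
    (aeval A f) *ᵥ v = f.eval θ • v := by
  induction f using Polynomial.induction_on' with
  | add p q hp hq => rw [map_add, Matrix.add_mulVec, hp, hq, eval_add, add_smul]
  | monomial i c =>
    rw [aeval_monomial, eval_monomial, Algebra.algebraMap_eq_smul_one,
      Matrix.smul_mul, Matrix.one_mul, Matrix.smul_mulVec, stmt16_pow_mulVec A v θ hv,
      smul_smul]

lemma stmt16_aeval_eq_zero_of_spectrum {n : Type*} [Fintype n] [DecidableEq n]
    (A : Matrix n n ℝ) (hA : A.IsHermitian) (f : Polynomial ℝ)
    (hf : ∀ θ ∈ spectrum ℝ A, f.eval θ = 0) : aeval A f = 0 := by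
  have hbasis : ∀ j, (aeval A f) *ᵥ ⇑(hA.eigenvectorBasis j) = 0 := by
    intro j
    rw [stmt16_aeval_mulVec A _ _ (hA.mulVec_eigenvectorBasis j),
      hf _ (hA.eigenvalues_mem_spectrum_real j), zero_smul]
  have hall : ∀ v : EuclideanSpace ℝ n, (aeval A f).mulVecLin v = 0 := by
    have hmaps : (aeval A f).mulVecLin ∘ₗ (WithLp.linearEquiv 2 ℝ (n → ℝ)).toLinearMap
        = (0 : EuclideanSpace ℝ n →ₗ[ℝ] (n → ℝ)) := by
      apply hA.eigenvectorBasis.toBasis.ext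
      intro j
      simpa using hbasis j
    intro v
    simpa using congrFun (congrArg (fun L => L.toFun) hmaps) v
  ext x y
  have h2 := hall ((WithLp.linearEquiv 2 ℝ (n → ℝ)).symm (Pi.single y 1))
  have h3 : (aeval A f) *ᵥ (Pi.single y 1) = 0 := by
    simp only [Matrix.mulVecLin_apply] at h2
    exact h2
  have := congrFun h3 x
  rw [Matrix.mulVec_single] at this
  simpa using this

lemma stmt16_eigen_const {X : Type*} [Fintype X] [DecidableEq X] (G : SimpleGraph X)
    [DecidableRel G.Adj] (k : ℕ) (hconn : G.Connected) (hreg : G.IsRegularOfDegree k)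
    (v : X → ℝ) (hv : G.adjMatrix ℝ *ᵥ v = (k : ℝ) • v) : ∀ x y : X, v x = v y := by
  haveI : Nonempty X := hconn.nonempty
  obtain ⟨x₀, -, hx₀⟩ := Finset.exists_max_image Finset.univ v ⟨Classical.arbitrary X, mem_univ _⟩
  have hstep : ∀ x : X, v x = v x₀ → ∀ z, G.Adj x z → v z = v x₀ := by
    intro x hx z hz
    have hsum : ∑ u ∈ G.neighborFinset x, v u = ∑ u ∈ G.neighborFinset x, v x₀ := by
      have h1 := congrFun hv x
      rw [SimpleGraph.adjMatrix_mulVec_apply] at h1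
      have hcard : (G.neighborFinset x).card = k := hreg x
      rw [h1, Finset.sum_const, hcard]
      simp [nsmul_eq_mul, hx]
    have h2 := (Finset.sum_eq_sum_iff_of_le
      (f := v) (g := fun _ => v x₀) (s := G.neighborFinset x)
      (fun u _ => hx₀ u (mem_univ u))).mp hsum z (by rwa [SimpleGraph.mem_neighborFinset])
    exact h2
  have hwalk : ∀ (x y : X), v x = v x₀ → G.Walk x y → v y = v x₀ := by
    intro x y hx w
    induction w with
    | nil => exact hx
    | cons h p ih => exact ih (hstep _ hx _ h)
  intro x y
  have hx := hwalk x₀ x rfl (hconn x₀ x).some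
  have hy := hwalk x₀ y rfl (hconn x₀ y).some
  rw [hx, hy]

lemma stmt16_hoffman {X : Type*} [Fintype X] [DecidableEq X] (G : SimpleGraph X)
    [DecidableRel G.Adj] (k : ℕ) (hconn : G.Connected) (hreg : G.IsRegularOfDegree k)
    (hspec : (spectrum ℝ (G.adjMatrix ℝ)).ncard = 4) :
    (Matrix.of fun _ _ : X => (1 : ℝ)) ∈
      Submodule.span ℝ (Set.range fun i : Fin 4 => (G.adjMatrix ℝ) ^ (i : ℕ)) := by
  haveI : Nonempty X := hconn.nonempty
  set A := G.adjMatrix ℝ with hAdef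
  have hHerm : A.IsHermitian := by
    show Aᴴ = A
    rw [Matrix.conjTranspose_eq_transpose_of_trivial]
    exact G.isSymm_adjMatrix
  -- all-ones vector is an eigenvector with eigenvalue k
  have hv : A *ᵥ (fun _ => (1 : ℝ)) = (k : ℝ) • (fun _ => (1 : ℝ)) := by
    funext x
    rw [show ((fun _ => (1:ℝ)) : X → ℝ) = Function.const X (1:ℝ) from rfl]
    rw [SimpleGraph.adjMatrix_mulVec_const_apply_of_regular hreg]
    simp
  -- k is in the spectrum
  have hkmem : (k : ℝ) ∈ spectrum ℝ A := by
    rw [spectrum.mem_iff]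
    intro hu
    rw [Matrix.isUnit_iff_isUnit_det, isUnit_iff_ne_zero] at hu
    apply hu
    rw [← Matrix.exists_mulVec_eq_zero_iff]
    refine ⟨fun _ => (1 : ℝ), ?_, ?_⟩
    · intro h0
      exact one_ne_zero (congrFun h0 (Classical.arbitrary X))
    · rw [Algebra.algebraMap_eq_smul_one, Matrix.sub_mulVec, Matrix.smul_mulVec,
        Matrix.one_mulVec, hv, sub_self]
  -- the spectrum as a finset
  have hsfin : (spectrum ℝ A).Finite := Set.finite_of_ncard_ne_zero (by rw [hspec]; omega)
  set sF := hsfin.toFinset with hsF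
  have hsFcard : sF.card = 4 := by
    rw [hsF, ← Set.ncard_eq_toFinset_card (spectrum ℝ A) hsfin, hspec]
  have hkF : (k : ℝ) ∈ sF := by rwa [hsF, Set.Finite.mem_toFinset]
  set t := sF.erase (k : ℝ) with ht
  have htcard : t.card = 3 := by rw [ht, Finset.card_erase_of_mem hkF, hsFcard]
  set p : Polynomial ℝ := ∏ θ ∈ t, (Polynomial.X - Polynomial.C θ) with hp
  set B := aeval A p with hB
  -- q := (X - C k) * p annihilates A
  have hq0 : aeval A ((Polynomial.X - Polynomial.C (k : ℝ)) * p) = 0 := by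
    apply stmt16_aeval_eq_zero_of_spectrum A hHerm
    intro θ hθ
    have hθF : θ ∈ sF := by rwa [hsF, Set.Finite.mem_toFinset]
    rw [hp, ht, Finset.mul_prod_erase sF (fun θ => Polynomial.X - Polynomial.C θ) hkF,
      eval_prod]
    exact Finset.prod_eq_zero hθF (by simp)
  -- A * B = k • B
  have hAB : A * B = (k : ℝ) • B := by
    have h1 : A * B = aeval A (Polynomial.X * p) := by rw [_root_.map_mul, aeval_X]
    have h2 : Polynomial.X * p = (Polynomial.X - Polynomial.C (k : ℝ)) * p
        + Polynomial.C (k : ℝ) * p := by ring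
    rw [h1, h2, map_add, hq0, zero_add, _root_.map_mul, aeval_C,
      Algebra.algebraMap_eq_smul_one, Matrix.smul_mul, Matrix.one_mul]
  -- columns of B are constant
  have hcolconst : ∀ (u : X → ℝ) (x x' : X), (B *ᵥ u) x = (B *ᵥ u) x' := by
    intro u
    apply stmt16_eigen_const G k hconn hreg
    rw [← hAdef, Matrix.mulVec_mulVec, hAB, Matrix.smul_mulVec]
  have hcol : ∀ (y x x' : X), B x y = B x' y := by
    intro y x x'
    have := hcolconst (Pi.single y 1) x x'
    rw [Matrix.mulVec_single] at this
    simpa using this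
  -- B is symmetric
  have hBsymm : ∀ x y : X, B x y = B y x := by
    have hBt : Bᵀ = B := by
      rw [hB, aeval_eq_sum_range, Matrix.transpose_sum]
      apply Finset.sum_congr rfl
      intro i _
      rw [Matrix.transpose_smul, Matrix.transpose_pow,
        (G.isSymm_adjMatrix : Aᵀ = A)]
    intro x y
    conv_lhs => rw [← hBt]
    rfl
  -- B is constant
  obtain ⟨x₀⟩ := ‹Nonempty X›
  have hconst : ∀ x y : X, B x y = B x₀ x₀ := by
    intro x y
    rw [hcol y x x₀, hBsymm x₀ y, hcol x₀ y x₀]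
  -- p.eval k ≠ 0
  have hpk : p.eval (k : ℝ) ≠ 0 := by
    rw [hp, eval_prod, Finset.prod_ne_zero_iff]
    intro θ hθ
    rw [ht] at hθ
    have hθk : θ ≠ (k : ℝ) := Finset.ne_of_mem_erase hθ
    simp only [eval_sub, eval_X, eval_C, sub_ne_zero]
    exact hθk.symm
  -- the constant is nonzero
  have hceval : (Fintype.card X : ℝ) * B x₀ x₀ = p.eval (k : ℝ) := by
    have h := congrFun (stmt16_aeval_mulVec A (fun _ => (1:ℝ)) (k : ℝ) hv p) x₀
    rw [← hB] at h
    simp only [Matrix.mulVec, dotProduct, mul_one, Pi.smul_apply, smul_eq_mul] at h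
    rw [Finset.sum_congr rfl (fun y _ => hconst x₀ y)] at h
    rw [Finset.sum_const, Finset.card_univ, nsmul_eq_mul] at h
    exact h
  have hc0 : B x₀ x₀ ≠ 0 := by
    intro h
    rw [h, mul_zero] at hceval
    exact hpk hceval.symm
  -- J = (B x₀ x₀)⁻¹ • B
  have hJ : (Matrix.of fun _ _ : X => (1 : ℝ)) = (B x₀ x₀)⁻¹ • B := by
    ext x y
    rw [Matrix.smul_apply, hconst x y, smul_eq_mul, inv_mul_cancel₀ hc0]
    rfl
  -- B is in the span
  have hBspan : B ∈ Submodule.span ℝ (Set.range fun i : Fin 4 => A ^ (i : ℕ)) := by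
    have hdeg : p.natDegree < 4 := by
      rw [hp]
      have : (∏ θ ∈ t, (Polynomial.X - Polynomial.C θ)).natDegree = 3 := by
        rw [Polynomial.natDegree_prod _ _ (fun θ _ => Polynomial.X_sub_C_ne_zero θ)]
        simp [Polynomial.natDegree_X_sub_C, htcard]
      omega
    rw [hB, aeval_eq_sum_range' hdeg]
    apply Submodule.sum_mem
    intro i hi
    apply Submodule.smul_mem
    apply Submodule.subset_span
    exact ⟨⟨i, Finset.mem_range.mp hi⟩, rfl⟩
  rw [hJ]
  exact Submodule.smul_mem _ _ hBspan

/-- A connected k-regular graph of diameter 2 with 4 distinct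
eigenvalues, in which any two vertices at distance 2 have exactly μ common
neighbours while the number of common neighbours of adjacent vertices takes
precisely the two values λ₁ ≠ λ₂, has span{I,A,A²,A³} closed under Hadamard
multiplication. -/
theorem stmt_16 {X : Type*} [Fintype X] [DecidableEq X]
    (G : SimpleGraph X) [DecidableRel G.Adj] (k μ lam₁ lam₂ : ℕ)
    (hconn : G.Connected) (hreg : G.IsRegularOfDegree k)
    (hdiam : (∀ x y : X, G.dist x y ≤ 2) ∧ ∃ x y : X, G.dist x y = 2)
    (hspec : (spectrum ℝ (G.adjMatrix ℝ)).ncard = 4)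
    (hmu : ∀ x y : X, G.dist x y = 2 →
      (G.neighborFinset x ∩ G.neighborFinset y).card = μ)
    (hne : lam₁ ≠ lam₂)
    (hlam : ∀ x y : X, G.Adj x y →
      (G.neighborFinset x ∩ G.neighborFinset y).card = lam₁ ∨
      (G.neighborFinset x ∩ G.neighborFinset y).card = lam₂)
    (hlam₁ : ∃ x y : X, G.Adj x y ∧
      (G.neighborFinset x ∩ G.neighborFinset y).card = lam₁)
    (hlam₂ : ∃ x y : X, G.Adj x y ∧
      (G.neighborFinset x ∩ G.neighborFinset y).card = lam₂) :
    ∀ M ∈ Submodule.span ℝ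
        (Set.range fun i : Fin 4 => (G.adjMatrix ℝ) ^ (i : ℕ)),
      ∀ N ∈ Submodule.span ℝ
        (Set.range fun i : Fin 4 => (G.adjMatrix ℝ) ^ (i : ℕ)),
      Matrix.hadamard M N ∈ Submodule.span ℝ
        (Set.range fun i : Fin 4 => (G.adjMatrix ℝ) ^ (i : ℕ)) := by
  haveI : Nonempty X := hconn.nonempty
  set A := G.adjMatrix ℝ with hAdef
  set W := Submodule.span ℝ (Set.range fun i : Fin 4 => A ^ (i : ℕ)) with hWdef
  -- indicator matrices
  set F₁ : Matrix X X ℝ := Matrix.of fun x y =>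
    if G.Adj x y ∧ (G.neighborFinset x ∩ G.neighborFinset y).card = lam₁ then 1 else 0 with hF₁def
  set F₂ : Matrix X X ℝ := Matrix.of fun x y =>
    if G.Adj x y ∧ (G.neighborFinset x ∩ G.neighborFinset y).card = lam₂ then 1 else 0 with hF₂def
  set F₃ : Matrix X X ℝ := Matrix.of fun x y =>
    if G.dist x y = 2 then 1 else 0 with hF₃def
  -- basic distance facts
  have hdist1 : ∀ x y : X, G.Adj x y → G.dist x y = 1 :=
    fun x y h => SimpleGraph.dist_eq_one_iff_adj.mpr h
  have hdist2 : ∀ x y : X, x ≠ y → ¬ G.Adj x y → G.dist x y = 2 := by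
    intro x y hxy hadj
    have h0 : G.dist x y ≠ 0 := fun h => hxy (hconn.dist_eq_zero_iff.mp h)
    have h1 : G.dist x y ≠ 1 := fun h => hadj (SimpleGraph.dist_eq_one_iff_adj.mp h)
    have h2 := hdiam.1 x y
    omega
  have hnotadj : ∀ x y : X, G.dist x y = 2 → ¬ G.Adj x y := by
    intro x y h hadj
    rw [hdist1 x y hadj] at h
    omega
  have hnoteq : ∀ x y : X, G.dist x y = 2 → x ≠ y := by
    intro x y h hxy
    rw [hxy, SimpleGraph.dist_self] at h
    omega
  -- common neighbour count
  have hA2 : ∀ x y : X, (A * A) x y =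
      ((G.neighborFinset x ∩ G.neighborFinset y).card : ℝ) := by
    intro x y
    rw [Matrix.mul_apply]
    have step : ∀ z : X, A x z * A z y = if G.Adj x z ∧ G.Adj z y then (1:ℝ) else 0 := by
      intro z
      rw [hAdef]
      by_cases h1 : G.Adj x z <;> by_cases h2 : G.Adj z y <;> simp [h1, h2]
    rw [Finset.sum_congr rfl (fun z _ => step z), Finset.sum_boole]
    congr 2
    ext z
    simp [SimpleGraph.mem_neighborFinset, G.adj_comm y z]
  -- the key quadratic identity
  have hkey : A * A = (k : ℝ) • (1 : Matrix X X ℝ) + (lam₁ : ℝ) • F₁ + (lam₂ : ℝ) • F₂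
      + (μ : ℝ) • F₃ := by
    ext x y
    rw [hA2 x y]
    simp only [Matrix.add_apply, Matrix.smul_apply, Matrix.one_apply, hF₁def, hF₂def, hF₃def,
      Matrix.of_apply, smul_eq_mul]
    by_cases hxy : x = y
    · subst hxy
      rw [Finset.inter_self]
      have : (G.neighborFinset x).card = k := hreg x
      simp [this, SimpleGraph.irrefl, SimpleGraph.dist_self]
    · by_cases hadj : G.Adj x y
      · have hd : G.dist x y = 1 := hdist1 x y hadj
        rcases hlam x y hadj with hcard | hcard
        · have hc2 : (G.neighborFinset x ∩ G.neighborFinset y).card ≠ lam₂ := by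
            rw [hcard]; exact_mod_cast hne
          simp [hxy, hadj, hcard, hc2, hd] <;> omega
        · have hc1 : (G.neighborFinset x ∩ G.neighborFinset y).card ≠ lam₁ := by
            rw [hcard]; exact fun h => hne h.symm
          simp [hxy, hadj, hcard, hc1, hd] <;> omega
      · have hd : G.dist x y = 2 := hdist2 x y hxy hadj
        have hc := hmu x y hd
        simp [hxy, hadj, hd, hc]
  -- membership of basic matrices in W
  have honeW : (1 : Matrix X X ℝ) ∈ W := by
    apply Submodule.subset_span
    exact ⟨(0 : Fin 4), by simp⟩
  have hAW : A ∈ W := by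
    apply Submodule.subset_span
    exact ⟨(1 : Fin 4), by simp⟩
  have hA2W : A * A ∈ W := by
    apply Submodule.subset_span
    exact ⟨(2 : Fin 4), by simp [pow_two]⟩
  have hJW : (Matrix.of fun _ _ : X => (1 : ℝ)) ∈ W := stmt16_hoffman G k hconn hreg hspec
  -- F₃ in terms of J
  have hF₃eq : F₃ = (Matrix.of fun _ _ : X => (1 : ℝ)) - 1 - A := by
    ext x y
    simp only [hF₃def, Matrix.of_apply, Matrix.sub_apply, Matrix.one_apply, hAdef,
      SimpleGraph.adjMatrix_apply]
    by_cases hxy : x = y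
    · subst hxy
      simp [SimpleGraph.dist_self, SimpleGraph.irrefl]
    · by_cases hadj : G.Adj x y
      · simp [hnotadj x y, hdist1 x y hadj, hxy, hadj]
      · simp [hdist2 x y hxy hadj, hxy, hadj]
  have hF₃W : F₃ ∈ W := by
    rw [hF₃eq]
    exact Submodule.sub_mem _ (Submodule.sub_mem _ hJW honeW) hAW
  -- F₁ and F₂ in W
  have hF12 : F₁ + F₂ = A := by
    ext x y
    simp only [hF₁def, hF₂def, Matrix.add_apply, Matrix.of_apply, hAdef,
      SimpleGraph.adjMatrix_apply]
    by_cases hadj : G.Adj x y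
    · rcases hlam x y hadj with hcard | hcard
      · have hc2 : (G.neighborFinset x ∩ G.neighborFinset y).card ≠ lam₂ := by
          rw [hcard]; exact_mod_cast hne
        simp [hadj, hcard, hc2] <;> omega
      · have hc1 : (G.neighborFinset x ∩ G.neighborFinset y).card ≠ lam₁ := by
          rw [hcard]; exact fun h => hne h.symm
        simp [hadj, hcard, hc1] <;> omega
    · simp [hadj]
  have hlamne : (lam₁ : ℝ) - (lam₂ : ℝ) ≠ 0 := by
    intro h
    apply hne
    exact_mod_cast sub_eq_zero.mp h
  have hF₁eq : F₁ = ((lam₁ : ℝ) - lam₂)⁻¹ •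
      (A * A - (k : ℝ) • (1 : Matrix X X ℝ) - (lam₂ : ℝ) • A - (μ : ℝ) • F₃) := by
    have h2 : F₂ = A - F₁ := by rw [← hF12]; abel
    rw [hkey, h2]
    rw [smul_sub, smul_smul]
    ext x y
    simp only [Matrix.smul_apply, Matrix.sub_apply, Matrix.add_apply, smul_eq_mul]
    field_simp
    ring
  have hF₁W : F₁ ∈ W := by
    rw [hF₁eq]
    exact Submodule.smul_mem _ _ (Submodule.sub_mem _ (Submodule.sub_mem _
      (Submodule.sub_mem _ hA2W (Submodule.smul_mem _ _ honeW))
      (Submodule.smul_mem _ _ hAW)) (Submodule.smul_mem _ _ hF₃W))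
  have hF₂W : F₂ ∈ W := by
    have : F₂ = A - F₁ := by rw [← hF12]; abel
    rw [this]
    exact Submodule.sub_mem _ hAW hF₁W
  -- the four indicator matrices as a family
  set g : Fin 4 → Matrix X X ℝ := ![1, F₁, F₂, F₃] with hgdef
  have hVW : Submodule.span ℝ (Set.range g) ≤ W := by
    rw [Submodule.span_le]
    rintro M ⟨i, rfl⟩
    fin_cases i
    · exact honeW
    · exact hF₁W
    · exact hF₂W
    · exact hF₃W
  obtain ⟨xa, ya, hadja, hcarda⟩ := hlam₁
  obtain ⟨xb, yb, hadjb, hcardb⟩ := hlam₂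
  obtain ⟨xd, yd, hdd⟩ := hdiam.2
  have hcadb : (G.neighborFinset xb ∩ G.neighborFinset yb).card ≠ lam₁ := by
    rw [hcardb]; exact fun h => hne h.symm
  have hcada : (G.neighborFinset xa ∩ G.neighborFinset ya).card ≠ lam₂ := by
    rw [hcarda]; exact hne
  have hli : LinearIndependent ℝ g := by
    rw [Fintype.linearIndependent_iff]
    intro c hc
    have hce : ∀ x y : X, c 0 * (1 : Matrix X X ℝ) x y + c 1 * F₁ x y + c 2 * F₂ x y
        + c 3 * F₃ x y = 0 := by
      intro x y
      have h := congrFun (congrFun hc x) y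
      simp only [hgdef, Fin.sum_univ_four, Matrix.add_apply, Matrix.smul_apply,
        Matrix.cons_val_zero, Matrix.cons_val_one, Matrix.head_cons, Matrix.cons_val_two,
        Matrix.tail_cons, Matrix.cons_val_three, smul_eq_mul, Matrix.zero_apply] at h
      linarith [h]
    have h0 : c 0 = 0 := by
      have h := hce xa xa
      simp [hF₁def, hF₂def, hF₃def, Matrix.one_apply, SimpleGraph.irrefl,
        SimpleGraph.dist_self] at h
      exact h
    have h1 : c 1 = 0 := by
      have h := hce xa ya
      simp [hF₁def, hF₂def, hF₃def, Matrix.one_apply, hadja.ne, hadja, hcarda, hcada,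
        hne, Ne.symm hne, hdist1 xa ya hadja] at h
      exact h
    have h2 : c 2 = 0 := by
      have h := hce xb yb
      simp [hF₁def, hF₂def, hF₃def, Matrix.one_apply, hadjb.ne, hadjb, hcardb, hcadb,
        hne, Ne.symm hne, hdist1 xb yb hadjb] at h
      exact h
    have h3 : c 3 = 0 := by
      have h := hce xd yd
      simp [hF₁def, hF₂def, hF₃def, Matrix.one_apply, hnoteq xd yd hdd,
        hnotadj xd yd hdd, hdd] at h
      exact h
    intro i
    fin_cases i
    · exact h0
    · exact h1
    · exact h2
    · exact h3
  have hvr : Module.finrank ℝ (Submodule.span ℝ (Set.range g)) = 4 := by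
    rw [finrank_span_eq_card hli]
    simp
  have hwr : Module.finrank ℝ W ≤ 4 := by
    have h1 := finrank_span_le_card (R := ℝ) (Set.range fun i : Fin 4 => A ^ (i : ℕ))
    have h2 : (Set.range fun i : Fin 4 => A ^ (i : ℕ)).toFinset.card ≤ 4 := by
      rw [Set.toFinset_range]
      exact le_trans (Finset.card_image_le) (by simp)
    rw [hWdef]
    omega
  have hVeqW : Submodule.span ℝ (Set.range g) = W := by
    apply Submodule.eq_of_le_of_finrank_le hVW
    rw [hvr]
    exact hwr
  -- Hadamard products of the generators
  -- Hadamard products of the generators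
  have p00 : Matrix.hadamard (1 : Matrix X X ℝ) 1 = 1 := by
    ext x y
    simp only [Matrix.hadamard_apply, Matrix.one_apply]
    split_ifs <;> norm_num
  have p01 : Matrix.hadamard (1 : Matrix X X ℝ) F₁ = 0 := by
    ext x y
    simp only [Matrix.hadamard_apply, hF₁def, Matrix.zero_apply, Matrix.of_apply,
      Matrix.one_apply]
    split_ifs with h1 h2 <;> try norm_num
    exact G.irrefl (h1 ▸ h2.1)
  have p02 : Matrix.hadamard (1 : Matrix X X ℝ) F₂ = 0 := by
    ext x y
    simp only [Matrix.hadamard_apply, hF₂def, Matrix.zero_apply, Matrix.of_apply,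
      Matrix.one_apply]
    split_ifs with h1 h2 <;> try norm_num
    exact G.irrefl (h1 ▸ h2.1)
  have p03 : Matrix.hadamard (1 : Matrix X X ℝ) F₃ = 0 := by
    ext x y
    simp only [Matrix.hadamard_apply, hF₃def, Matrix.zero_apply, Matrix.of_apply,
      Matrix.one_apply]
    split_ifs with h1 h2 <;> try norm_num
    subst h1
    rw [SimpleGraph.dist_self] at h2
    omega
  have p11 : Matrix.hadamard F₁ F₁ = F₁ := by
    ext x y
    simp only [Matrix.hadamard_apply, hF₁def, Matrix.of_apply]
    split_ifs <;> norm_num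
  have p12 : Matrix.hadamard F₁ F₂ = 0 := by
    ext x y
    simp only [Matrix.hadamard_apply, hF₁def, hF₂def, Matrix.zero_apply, Matrix.of_apply]
    split_ifs with h1 h2 <;> try norm_num
    exact hne (h1.2 ▸ h2.2 ▸ rfl)
  have p13 : Matrix.hadamard F₁ F₃ = 0 := by
    ext x y
    simp only [Matrix.hadamard_apply, hF₁def, hF₃def, Matrix.zero_apply, Matrix.of_apply]
    split_ifs with h1 h2 <;> try norm_num
    have := hdist1 x y h1.1
    omega
  have p22 : Matrix.hadamard F₂ F₂ = F₂ := by
    ext x y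
    simp only [Matrix.hadamard_apply, hF₂def, Matrix.of_apply]
    split_ifs <;> norm_num
  have p23 : Matrix.hadamard F₂ F₃ = 0 := by
    ext x y
    simp only [Matrix.hadamard_apply, hF₂def, hF₃def, Matrix.zero_apply, Matrix.of_apply]
    split_ifs with h1 h2 <;> try norm_num
    have := hdist1 x y h1.1
    omega
  have p33 : Matrix.hadamard F₃ F₃ = F₃ := by
    ext x y
    simp only [Matrix.hadamard_apply, hF₃def, Matrix.of_apply]
    split_ifs <;> norm_num
  have p10 : Matrix.hadamard F₁ (1 : Matrix X X ℝ) = 0 := by rw [Matrix.hadamard_comm, p01]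
  have p20 : Matrix.hadamard F₂ (1 : Matrix X X ℝ) = 0 := by rw [Matrix.hadamard_comm, p02]
  have p30 : Matrix.hadamard F₃ (1 : Matrix X X ℝ) = 0 := by rw [Matrix.hadamard_comm, p03]
  have p21 : Matrix.hadamard F₂ F₁ = 0 := by rw [Matrix.hadamard_comm, p12]
  have p31 : Matrix.hadamard F₃ F₁ = 0 := by rw [Matrix.hadamard_comm, p13]
  have p32 : Matrix.hadamard F₃ F₂ = 0 := by rw [Matrix.hadamard_comm, p23]
  have m0 : (1 : Matrix X X ℝ) ∈ Submodule.span ℝ (Set.range g) :=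
    Submodule.subset_span ⟨0, rfl⟩
  have m1 : F₁ ∈ Submodule.span ℝ (Set.range g) := Submodule.subset_span ⟨1, rfl⟩
  have m2 : F₂ ∈ Submodule.span ℝ (Set.range g) := Submodule.subset_span ⟨2, rfl⟩
  have m3 : F₃ ∈ Submodule.span ℝ (Set.range g) := Submodule.subset_span ⟨3, rfl⟩
  have mz : (0 : Matrix X X ℝ) ∈ Submodule.span ℝ (Set.range g) := Submodule.zero_mem _
  have hprodmem : ∀ i j : Fin 4, Matrix.hadamard (g i) (g j) ∈
      Submodule.span ℝ (Set.range g) := by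
    intro i j
    fin_cases i <;> fin_cases j
    · show Matrix.hadamard (1 : Matrix X X ℝ) 1 ∈ _; rw [p00]; exact m0
    · show Matrix.hadamard (1 : Matrix X X ℝ) F₁ ∈ _; rw [p01]; exact mz
    · show Matrix.hadamard (1 : Matrix X X ℝ) F₂ ∈ _; rw [p02]; exact mz
    · show Matrix.hadamard (1 : Matrix X X ℝ) F₃ ∈ _; rw [p03]; exact mz
    · show Matrix.hadamard F₁ (1 : Matrix X X ℝ) ∈ _; rw [p10]; exact mz
    · show Matrix.hadamard F₁ F₁ ∈ _; rw [p11]; exact m1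
    · show Matrix.hadamard F₁ F₂ ∈ _; rw [p12]; exact mz
    · show Matrix.hadamard F₁ F₃ ∈ _; rw [p13]; exact mz
    · show Matrix.hadamard F₂ (1 : Matrix X X ℝ) ∈ _; rw [p20]; exact mz
    · show Matrix.hadamard F₂ F₁ ∈ _; rw [p21]; exact mz
    · show Matrix.hadamard F₂ F₂ ∈ _; rw [p22]; exact m2
    · show Matrix.hadamard F₂ F₃ ∈ _; rw [p23]; exact mz
    · show Matrix.hadamard F₃ (1 : Matrix X X ℝ) ∈ _; rw [p30]; exact mz
    · show Matrix.hadamard F₃ F₁ ∈ _; rw [p31]; exact mz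
    · show Matrix.hadamard F₃ F₂ ∈ _; rw [p32]; exact mz
    · show Matrix.hadamard F₃ F₃ ∈ _; rw [p33]; exact m3
  -- conclude
  intro M hM N hN
  rw [← hVeqW] at hM hN ⊢
  induction hM, hN using Submodule.span_induction₂ with
  | mem_mem M N hMg hNg =>
    obtain ⟨i, rfl⟩ := hMg
    obtain ⟨j, rfl⟩ := hNg
    exact hprodmem i j
  | zero_left N hN => rw [Matrix.zero_hadamard]; exact Submodule.zero_mem _
  | zero_right M hM => rw [Matrix.hadamard_zero]; exact Submodule.zero_mem _
  | add_left M N P hM hN hP h1 h2 =>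
    rw [Matrix.add_hadamard]; exact Submodule.add_mem _ h1 h2
  | add_right M N P hM hN hP h1 h2 =>
    rw [Matrix.hadamard_add]; exact Submodule.add_mem _ h1 h2
  | smul_left r M N hM hN h1 =>
    rw [Matrix.smul_hadamard]; exact Submodule.smul_mem _ _ h1
  | smul_right r M N hM hN h1 =>
    rw [Matrix.hadamard_smul]; exact Submodule.smul_mem _ _ h1
end

section
/- Let Γ be a connected regular graph whose adjacency algebra 𝒜 = span{I,A,...,A^d} is closed under Hadamard multiplication, with standard basis {F₀,...,F_d} of pairwise disjoint symmetric (0,1)-matrices summing to J and containing I. Then for each vertex x, the partition of X into cells P_i(x) = {z : (F_i)_{xz} = 1} is an equitable partition of Γ, with parameters c_{ij} = |Γ(y) ∩ P_i(x)| for y ∈ P_j(x) independent of the choices of x and y. -/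
open Polynomial Matrix

/-- Conjugation by a unitary matrix as an algebra homomorphism. -/
noncomputable def conjAH {n : Type*} [Fintype n] [DecidableEq n]
    (u : Matrix.unitaryGroup n ℝ) : Matrix n n ℝ →ₐ[ℝ] Matrix n n ℝ where
  toFun M := u * M * star (u : Matrix n n ℝ)
  map_one' := by
    simpa using (Matrix.mem_unitaryGroup_iff.mp u.2)
  map_mul' M N := by
    have h : star (u : Matrix n n ℝ) * u = 1 := Unitary.coe_star_mul_self u
    calc (u : Matrix n n ℝ) * (M * N) * star (u : Matrix n n ℝ)
        = (u * M) * (star (u : Matrix n n ℝ) * u) * (N * star (u : Matrix n n ℝ)) := by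
          rw [h]; noncomm_ring
      _ = ((u : Matrix n n ℝ) * M * star (u : Matrix n n ℝ)) *
          ((u : Matrix n n ℝ) * N * star (u : Matrix n n ℝ)) := by noncomm_ring
  map_zero' := by simp
  map_add' M N := by noncomm_ring
  commutes' r := by
    simp only [Algebra.algebraMap_eq_smul_one, Matrix.smul_mul, Matrix.mul_smul, Matrix.mul_one]
    rw [Matrix.mem_unitaryGroup_iff.mp u.2]

/-- A Hermitian real matrix is annihilated by the product of (X - λ) over its spectrum. -/
theorem aeval_spectrum_prod_eq_zero {n : Type*} [Fintype n] [DecidableEq n]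
    {A : Matrix n n ℝ} (hA : A.IsHermitian) (hfin : (spectrum ℝ A).Finite) :
    Polynomial.aeval A (∏ lam ∈ hfin.toFinset, (X - C lam)) = 0 := by
  set p : ℝ[X] := ∏ lam ∈ hfin.toFinset, (X - C lam) with hp
  have h1 : A = conjAH hA.eigenvectorUnitary (diagonal (RCLike.ofReal ∘ hA.eigenvalues)) :=
    hA.spectral_theorem
  have h2 : diagonal (RCLike.ofReal ∘ hA.eigenvalues) =
      diagonalAlgHom ℝ (n := n) (α := ℝ) (RCLike.ofReal ∘ hA.eigenvalues) := rfl
  rw [h1, h2, Polynomial.aeval_algHom_apply, Polynomial.aeval_algHom_apply]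
  have h3 : Polynomial.aeval (RCLike.ofReal ∘ hA.eigenvalues : n → ℝ) p = 0 := by
    funext i
    have h4 : Polynomial.aeval ((RCLike.ofReal ∘ hA.eigenvalues : n → ℝ) i) p = 0 := by
      rw [Polynomial.aeval_def, Polynomial.eval₂_eq_eval_map,
        show algebraMap ℝ ℝ = RingHom.id ℝ from rfl, Polynomial.map_id]
      rw [hp, Polynomial.eval_prod]
      apply Finset.prod_eq_zero (i := (RCLike.ofReal ∘ hA.eigenvalues : n → ℝ) i)
      · rw [Set.Finite.mem_toFinset]
        simpa using hA.eigenvalues_mem_spectrum_real i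
      · simp
    calc Polynomial.aeval (RCLike.ofReal ∘ hA.eigenvalues : n → ℝ) p i
        = Polynomial.aeval ((RCLike.ofReal ∘ hA.eigenvalues : n → ℝ) i) p :=
          (Polynomial.aeval_algHom_apply (Pi.evalAlgHom ℝ (fun _ => ℝ) i)
            (RCLike.ofReal ∘ hA.eigenvalues) p).symm
      _ = 0 := h4
  rw [h3, map_zero, map_zero]

/-- If a Hermitian matrix has exactly d+1 points in its real spectrum, then A^(d+1)
lies in the span of I, A, ..., A^d. -/
theorem pow_succ_mem_span_pows {n : Type*} [Fintype n] [DecidableEq n]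
    {A : Matrix n n ℝ} (hA : A.IsHermitian) {d : ℕ}
    (hspec : (spectrum ℝ A).ncard = d + 1) :
    A ^ (d + 1) ∈ Submodule.span ℝ (Set.range fun j : Fin (d + 1) => A ^ (j : ℕ)) := by
  have hfin : (spectrum ℝ A).Finite :=
    Set.finite_of_ncard_ne_zero (by omega)
  set p : ℝ[X] := ∏ lam ∈ hfin.toFinset, (X - C lam) with hp
  have hmonic : p.Monic := monic_prod_of_monic _ _ fun i _ => monic_X_sub_C i
  have hcard : hfin.toFinset.card = d + 1 := by
    rw [← Set.ncard_eq_toFinset_card _ hfin, hspec]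
  have hdeg : p.natDegree = d + 1 := by
    rw [hp, Polynomial.natDegree_prod _ _ (fun i _ => X_sub_C_ne_zero i)]
    simp [hcard]
  have hzero : Polynomial.aeval A p = 0 := aeval_spectrum_prod_eq_zero hA hfin
  have hsum : ∑ i ∈ Finset.range (d + 2), p.coeff i • A ^ i = 0 := by
    rw [← Polynomial.aeval_eq_sum_range' (by omega : p.natDegree < d + 2), hzero]
  rw [Finset.sum_range_succ] at hsum
  have hlead : p.coeff (d + 1) = 1 := by
    have := hmonic.coeff_natDegree
    rwa [hdeg] at this
  rw [hlead, one_smul] at hsum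
  have hA1 : A ^ (d + 1) = -∑ i ∈ Finset.range (d + 1), p.coeff i • A ^ i := by
    linear_combination (norm := module) hsum
  rw [hA1]
  refine neg_mem (Submodule.sum_mem _ fun i hi => Submodule.smul_mem _ _ ?_)
  exact Submodule.subset_span ⟨⟨i, Finset.mem_range.mp hi⟩, rfl⟩

/-- If the adjacency algebra 𝒜 = span{I,A,...,A^d} of a connected
regular graph is closed under Hadamard multiplication, with standard basis
{F₀,...,F_d} of pairwise disjoint symmetric (0,1)-matrices summing to J and
containing I, then for each vertex x the partition into cells
P_i(x) = {z : (F_i)_{xz} = 1} is equitable, with parameters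
c_{ij} = |Γ(y) ∩ P_i(x)| (y ∈ P_j(x)) independent of x and y. -/
theorem stmt_17 {X : Type*} [Fintype X] [DecidableEq X]
    (G : SimpleGraph X) [DecidableRel G.Adj] (k d : ℕ)
    (hconn : G.Connected) (hreg : G.IsRegularOfDegree k)
    (hspec : (spectrum ℝ (G.adjMatrix ℝ)).ncard = d + 1)
    (hhad : ∀ M ∈ Submodule.span ℝ
        (Set.range fun j : Fin (d + 1) => (G.adjMatrix ℝ) ^ (j : ℕ)),
      ∀ N ∈ Submodule.span ℝ
        (Set.range fun j : Fin (d + 1) => (G.adjMatrix ℝ) ^ (j : ℕ)),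
      Matrix.hadamard M N ∈ Submodule.span ℝ
        (Set.range fun j : Fin (d + 1) => (G.adjMatrix ℝ) ^ (j : ℕ)))
    (F : Fin (d + 1) → Matrix X X ℝ)
    (hF01 : ∀ i x y, F i x y = 0 ∨ F i x y = 1)
    (hFsymm : ∀ i, (F i).IsSymm)
    (hdisj : ∀ i j, i ≠ j → Matrix.hadamard (F i) (F j) = 0)
    (hsum : ∑ i, F i = Matrix.of fun _ _ => (1 : ℝ))
    (hI : ∃ m, F m = 1)
    (hspan : Submodule.span ℝ (Set.range F) =
      Submodule.span ℝ (Set.range fun j : Fin (d + 1) => (G.adjMatrix ℝ) ^ (j : ℕ))) :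
    ∃ c : Fin (d + 1) → Fin (d + 1) → ℕ,
      ∀ (i j : Fin (d + 1)) (x y : X), F j x y = 1 →
        {z : X | G.Adj y z ∧ F i x z = 1}.ncard = c i j := by
  classical
  set A : Matrix X X ℝ := G.adjMatrix ℝ with hA
  have hherm : A.IsHermitian := by
    rw [Matrix.IsHermitian, Matrix.conjTranspose_eq_transpose_of_trivial]
    exact G.isSymm_adjMatrix
  set S : Submodule ℝ (Matrix X X ℝ) :=
    Submodule.span ℝ (Set.range fun j : Fin (d + 1) => A ^ (j : ℕ)) with hS
  -- the span of powers is closed under right multiplication by A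
  have hclosed : ∀ M ∈ S, M * A ∈ S := by
    intro M hM
    induction hM using Submodule.span_induction with
    | mem x hx =>
        obtain ⟨⟨j, hj⟩, rfl⟩ := hx
        simp only
        rw [← pow_succ]
        rcases Nat.lt_or_ge (j + 1) (d + 1) with h | h
        · exact Submodule.subset_span ⟨⟨j + 1, h⟩, rfl⟩
        · have hj1 : j = d := by omega
          subst hj1
          exact pow_succ_mem_span_pows hherm hspec
    | zero => simpa using Submodule.zero_mem S
    | add x y _ _ hx hy => rw [add_mul]; exact Submodule.add_mem S hx hy
    | smul r x _ hx => rw [Matrix.smul_mul]; exact Submodule.smul_mem S r hx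
  -- F i * A lies in span of F
  have hFA : ∀ i, F i * A ∈ Submodule.span ℝ (Set.range F) := by
    intro i
    rw [hspan]
    exact hclosed _ (hspan ▸ Submodule.subset_span ⟨i, rfl⟩)
  have hex : ∀ i, ∃ b : Fin (d + 1) → ℝ, ∑ h, b h • F h = F i * A := fun i =>
    Submodule.mem_span_range_iff_exists_fun ℝ |>.mp (hFA i)
  choose b hb using hex
  -- entries of F are 0 off the class j and 1 on it
  have hoff : ∀ {h j : Fin (d + 1)} {x y : X}, h ≠ j → F j x y = 1 → F h x y = 0 := by
    intro h j x y hne hxy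
    have := congrFun (congrFun (hdisj h j hne) x) y
    rw [Matrix.hadamard_apply, hxy, mul_one] at this
    simpa using this
  -- the matrix entry (F i * A) x y equals the neighbourhood count
  have hcount : ∀ (i : Fin (d + 1)) (x y : X),
      (F i * A) x y = (({z : X | G.Adj y z ∧ F i x z = 1}).ncard : ℝ) := by
    intro i x y
    have : ({z : X | G.Adj y z ∧ F i x z = 1}).ncard =
        (Finset.univ.filter fun z => G.Adj y z ∧ F i x z = 1).card := by
      rw [Set.ncard_eq_toFinset_card']
      congr 1
      ext z
      simp
    rw [this, Matrix.mul_apply, Finset.card_filter]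
    push_cast
    apply Finset.sum_congr rfl
    intro z _
    rcases hF01 i x z with h0 | h1
    · simp [h0, hA]
    · simp [h1, hA, SimpleGraph.adjMatrix_apply, G.adj_comm y z]
  -- the entry equals b i j when F j x y = 1
  have hkey : ∀ (i j : Fin (d + 1)) (x y : X), F j x y = 1 →
      (({z : X | G.Adj y z ∧ F i x z = 1}).ncard : ℝ) = b i j := by
    intro i j x y hxy
    rw [← hcount, ← hb i]
    have : ∀ h : Fin (d + 1), (∑ h', b i h' • F h') x y = ∑ h', b i h' * F h' x y := by
      intro _; simp [Matrix.sum_apply]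
    rw [this j]
    rw [Finset.sum_eq_single j]
    · rw [hxy, mul_one]
    · intro h _ hne
      rw [hoff hne hxy, mul_zero]
    · intro habs
      exact absurd (Finset.mem_univ j) habs
  refine ⟨fun i j => if hij : ∃ q : X × X, F j q.1 q.2 = 1 then
      ({z : X | G.Adj hij.choose.2 z ∧ F i hij.choose.1 z = 1}).ncard else 0, ?_⟩
  intro i j x y hxy
  have hij : ∃ q : X × X, F j q.1 q.2 = 1 := ⟨(x, y), hxy⟩
  simp only [dif_pos hij]
  have h1 := hkey i j x y hxy
  have h2 := hkey i j hij.choose.1 hij.choose.2 hij.choose_spec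
  exact_mod_cast h1.trans h2.symm
end

section
/- Let Γ be a connected regular graph with d+1 distinct eigenvalues and diameter D, and suppose its adjacency algebra 𝒜 = span{I,A,...,A^d} is closed under Hadamard multiplication. Then every distance matrix A_i (0 ≤ i ≤ D) of Γ lies in 𝒜; i.e., Γ is distance-polynomial. -/
/-!
A Hermitian matrix with `d + 1` distinct eigenvalues is annihilated by the degree `d + 1` monic
polynomial `∏ (X - μ)` over its spectrum, so `𝒜 = span {A ^ j | j ≤ d}` contains every power of
`A`. Closure under the Hadamard product lets one apply any `g` with `g 0 = 0` entrywise to a member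
of `𝒜`, because on the finitely many entries `g` agrees with its Lagrange interpolant, a polynomial
without constant term. The `(x, y)` entry of `∑_{k < n} A ^ k` counts the walks of length `< n`
from `x` to `y`, so its support is the relation `dist x y < n`; the distance matrix `A_i` is the
difference of the supports for `n = i + 1` and `n = i`.
-/

open Polynomial

theorem Polynomial.aeval_mem_span_pow_of_aeval_eq_zero {R S : Type*} [CommRing R] [Ring S]
    [Algebra R S] {a : S} {q : R[X]} (hq : q.Monic) (hqa : aeval a q = 0) (p : R[X]) :
    aeval a p ∈ Submodule.span R (Set.range fun j : Fin q.natDegree => a ^ (j : ℕ)) := by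
  by_cases hq1 : q = 1
  · have : Subsingleton S := subsingleton_of_zero_eq_one (by simpa [hq1] using hqa.symm)
    simp [Subsingleton.elim (aeval a p) 0]
  rw [← aeval_modByMonic_eq_self_of_root hqa,
    aeval_eq_sum_range' (natDegree_modByMonic_lt p hq hq1)]
  exact Submodule.sum_mem _ fun j hj =>
    Submodule.smul_mem _ _ (Submodule.subset_span ⟨⟨j, Finset.mem_range.mp hj⟩, rfl⟩)

namespace Matrix.IsHermitian

variable {n 𝕜 : Type*} [RCLike 𝕜] [Fintype n] [DecidableEq n] {A : Matrix n n 𝕜}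

theorem aeval_eq_zero_of_eval_eq_zero (hA : A.IsHermitian) {p : ℝ[X]}
    (hp : ∀ μ ∈ spectrum ℝ A, p.eval μ = 0) : aeval A p = 0 := by
  rw [← cfc_polynomial p A hA.isSelfAdjoint, cfc_congr (g := 0) hp, cfc_zero]

theorem pow_mem_span_pow (hA : A.IsHermitian) (k : ℕ) :
    A ^ k ∈ Submodule.span ℝ
      (Set.range fun j : Fin (spectrum ℝ A).ncard => A ^ (j : ℕ)) := by
  set F := A.finite_real_spectrum.toFinset
  have hmonic : (∏ μ ∈ F, (X - C μ)).Monic := monic_prod_of_monic _ _ fun μ _ => monic_X_sub_C μ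
  have hdeg : (∏ μ ∈ F, (X - C μ)).natDegree = (spectrum ℝ A).ncard := by
    rw [natDegree_prod_of_monic _ _ fun μ _ => monic_X_sub_C μ,
      Set.ncard_eq_toFinset_card _ A.finite_real_spectrum]
    simp [F]
  have hroot : aeval A (∏ μ ∈ F, (X - C μ)) = 0 :=
    hA.aeval_eq_zero_of_eval_eq_zero fun μ hμ => by
      rw [eval_prod]
      exact Finset.prod_eq_zero (A.finite_real_spectrum.mem_toFinset.mpr hμ) (by simp)
  exact hdeg ▸ aeval_X_pow (R := ℝ) (x := A) (n := k) ▸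
    aeval_mem_span_pow_of_aeval_eq_zero hmonic hroot _

end Matrix.IsHermitian

namespace Matrix

variable {m n K : Type*} [Field K] {𝒜 : Submodule K (Matrix m n K)} {M : Matrix m n K}

theorem map_pow_succ_mem_of_hadamard_closed (hhad : ∀ M ∈ 𝒜, ∀ N ∈ 𝒜, M ⊙ N ∈ 𝒜)
    (hM : M ∈ 𝒜) (k : ℕ) : M.map (· ^ (k + 1)) ∈ 𝒜 := by
  induction k with
  | zero => simpa using hM
  | succ k ih =>
    have : M.map (· ^ (k + 1 + 1)) = M ⊙ M.map (· ^ (k + 1)) := by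
      ext; simp [pow_succ']
    exact this ▸ hhad M hM _ ih

theorem map_eval_mem_of_hadamard_closed (hhad : ∀ M ∈ 𝒜, ∀ N ∈ 𝒜, M ⊙ N ∈ 𝒜)
    (hM : M ∈ 𝒜) {p : K[X]} (hp : p.coeff 0 = 0) : M.map p.eval ∈ 𝒜 := by
  have : M.map p.eval = ∑ k ∈ Finset.range (p.natDegree + 1), p.coeff k • M.map (· ^ k) := by
    ext; simp [Matrix.sum_apply, eval_eq_sum_range]
  rw [this]
  refine Submodule.sum_mem _ fun k _ => ?_
  cases k with
  | zero => simp [hp]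
  | succ k => exact Submodule.smul_mem _ _ (map_pow_succ_mem_of_hadamard_closed hhad hM k)

theorem map_mem_of_hadamard_closed [Fintype m] [Fintype n]
    (hhad : ∀ M ∈ 𝒜, ∀ N ∈ 𝒜, M ⊙ N ∈ 𝒜) (hM : M ∈ 𝒜) {g : K → K} (hg : g 0 = 0) :
    M.map g ∈ 𝒜 := by
  classical
  let nodes : Finset K := insert 0 (Finset.univ.image fun ij : m × n => M ij.1 ij.2)
  let p := Lagrange.interpolate nodes id g
  have hp : ∀ t ∈ nodes, p.eval t = g t := fun t ht =>
    Lagrange.eval_interpolate_at_node g (Set.injOn_id _) ht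
  have hMp : M.map g = M.map p.eval := by
    ext i j
    exact (hp _ (Finset.mem_insert_of_mem
      (Finset.mem_image_of_mem _ (Finset.mem_univ (i, j))))).symm
  rw [hMp]
  refine map_eval_mem_of_hadamard_closed hhad hM ?_
  rw [coeff_zero_eq_eval_zero, hp 0 (Finset.mem_insert_self _ _), hg]

end Matrix

namespace SimpleGraph

variable {V : Type*} {G : SimpleGraph V}

theorem exists_walk_length_lt_iff_dist_lt (hconn : G.Connected) {u v : V} {n : ℕ} :
    (∃ p : G.Walk u v, p.length < n) ↔ G.dist u v < n :=
  ⟨fun ⟨p, hp⟩ => (dist_le p).trans_lt hp, fun h =>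
    let ⟨p, hp⟩ := hconn.exists_walk_length_eq_dist u v
    ⟨p, hp ▸ h⟩⟩

theorem sum_range_adjMatrix_pow_apply_ne_zero_iff [Fintype V] [DecidableEq V]
    [DecidableRel G.Adj] {R : Type*} [Semiring R] [CharZero R] (hconn : G.Connected)
    (n : ℕ) (u v : V) :
    (∑ k ∈ Finset.range n, G.adjMatrix R ^ k) u v ≠ 0 ↔ G.dist u v < n := by
  rw [← exists_walk_length_lt_iff_dist_lt hconn, Matrix.sum_apply]
  simp only [adjMatrix_pow_apply_eq_card_walk]
  rw [← Nat.cast_sum, Nat.cast_ne_zero, Ne, Finset.sum_eq_zero_iff]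
  simp only [Finset.mem_range, Fintype.card_eq_zero_iff, not_forall, not_isEmpty_iff]
  exact ⟨fun ⟨k, hk, ⟨p, hp⟩⟩ => ⟨p, hp ▸ hk⟩, fun ⟨p, hp⟩ => ⟨p.length, hp, ⟨p, rfl⟩⟩⟩

end SimpleGraph

theorem stmt_19_general {X : Type*} [Fintype X] [DecidableEq X]
    (G : SimpleGraph X) [DecidableRel G.Adj] (d : ℕ)
    (hconn : G.Connected)
    (hspec : (spectrum ℝ (G.adjMatrix ℝ)).ncard = d + 1)
    (hhad : ∀ M ∈ Submodule.span ℝ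
        (Set.range fun j : Fin (d + 1) => (G.adjMatrix ℝ) ^ (j : ℕ)),
      ∀ N ∈ Submodule.span ℝ
        (Set.range fun j : Fin (d + 1) => (G.adjMatrix ℝ) ^ (j : ℕ)),
      Matrix.hadamard M N ∈ Submodule.span ℝ
        (Set.range fun j : Fin (d + 1) => (G.adjMatrix ℝ) ^ (j : ℕ))) :
    ∀ i : ℕ,
      (Matrix.of fun x y : X => if G.dist x y = i then (1 : ℝ) else 0) ∈
        Submodule.span ℝ
          (Set.range fun j : Fin (d + 1) => (G.adjMatrix ℝ) ^ (j : ℕ)) := by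
  intro i
  set A := G.adjMatrix ℝ
  have hA : A.IsHermitian := G.isHermitian_adjMatrix ℝ
  have hpow (k : ℕ) : A ^ k ∈ Submodule.span ℝ (Set.range fun j : Fin (d + 1) => A ^ (j : ℕ)) :=
    hspec ▸ hA.pow_mem_span_pow k
  let ball (n : ℕ) := (∑ k ∈ Finset.range n, A ^ k).map fun t => if t = 0 then (0 : ℝ) else 1
  have hball (n : ℕ) : ball n ∈ Submodule.span ℝ (Set.range fun j : Fin (d + 1) => A ^ (j : ℕ)) :=
    Matrix.map_mem_of_hadamard_closed hhad (Submodule.sum_mem _ fun k _ => hpow k) (by simp)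
  have hdist : (Matrix.of fun x y : X => if G.dist x y = i then (1 : ℝ) else 0) =
      ball (i + 1) - ball i := by
    ext x y
    have hsupp (n : ℕ) : (∑ k ∈ Finset.range n, A ^ k) x y = 0 ↔ ¬G.dist x y < n :=
      not_iff_not.mp (by simpa using G.sum_range_adjMatrix_pow_apply_ne_zero_iff hconn n x y)
    simp only [ball, Matrix.of_apply, Matrix.sub_apply, Matrix.map_apply, hsupp]
    split_ifs <;> norm_num <;> omega
  exact hdist ▸ Submodule.sub_mem _ (hball (i + 1)) (hball i)

/-- If the adjacency algebra 𝒜 = span{I,A,...,A^d} of a connected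
regular graph with d+1 distinct eigenvalues and diameter D is closed under
Hadamard multiplication, then every distance matrix A_i (0 ≤ i ≤ D) lies in 𝒜;
i.e. the graph is distance-polynomial. -/
theorem stmt_19 {X : Type*} [Fintype X] [DecidableEq X]
    (G : SimpleGraph X) [DecidableRel G.Adj] (k d : ℕ)
    (hconn : G.Connected) (hreg : G.IsRegularOfDegree k)
    (hspec : (spectrum ℝ (G.adjMatrix ℝ)).ncard = d + 1)
    (hhad : ∀ M ∈ Submodule.span ℝ
        (Set.range fun j : Fin (d + 1) => (G.adjMatrix ℝ) ^ (j : ℕ)),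
      ∀ N ∈ Submodule.span ℝ
        (Set.range fun j : Fin (d + 1) => (G.adjMatrix ℝ) ^ (j : ℕ)),
      Matrix.hadamard M N ∈ Submodule.span ℝ
        (Set.range fun j : Fin (d + 1) => (G.adjMatrix ℝ) ^ (j : ℕ))) :
    ∀ i : ℕ,
      (Matrix.of fun x y : X => if G.dist x y = i then (1 : ℝ) else 0) ∈
        Submodule.span ℝ
          (Set.range fun j : Fin (d + 1) => (G.adjMatrix ℝ) ^ (j : ℕ)) :=
  stmt_19_general G d hconn hspec hhad
end
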